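/- Let C1 be a q-ary 1-perfect code of length n = (q^m−1)/(q−1), m ≥ 2, let R_i be the principal i-component of the q-ary Hamming code H_{q,m+1} of length qn+1 with i ≤ (q−1)n + 1, and for each c ∈ C1 let σ_c be a permutation of F_q. Then C = ∪_{c ∈ C1} σ_c(R_i + (0 | c)) is a q-ary 1-perfect code of length qn + 1, where 0 ∈ F_q^{(q−1)n+1} and σ_c acts on coordinate i. -/

import Mathlib

/-! Every point `j ≠ i` of `PG_m(q)` lies on a unique line through `i`, and that line meets the
hyperplane in a single point `ℓ(j)`; writing `h_j = α_j h_i + β_j h_{ℓ(j)}` gives a linear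
folding `x ↦ ∑_{j ≠ i} x_j β_j e_{ℓ(j)}` of `F^{qn+1}` onto `F^n`. It ignores coordinate `i`, is
the identity on the hyperplane block, kills `R_i` (a folded triple is a hyperplane codeword of
weight at most 2) and does not increase Hamming distance. So it maps the piece
`σ_c(R_i + (0 | c))` onto `c`: different pieces inherit distance `≥ 3` from `C1`, and inside one
piece it comes from the Hamming code. Restricting `R_i` to the coordinates off the hyperplane
other than `i` is bijective (the folding recovers the hyperplane block, and the triple on the
line through `i` and `j` restricts to `e_j`), so `|R_i| = q^{(q-1)n}`; since
`1 + (qn+1)(q-1) = q (1 + n(q-1))`, the size of `C` then follows from that of `C1`. -/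

variable {F : Type*} [Field F] [Fintype F] [DecidableEq F] {m n : ℕ}

/-- The linear code with parity-check columns `h`. -/
def parityCheckCode (h : Fin n → Fin m → F) : Submodule F (Fin n → F) where
  carrier := {x | ∑ j, x j • h j = 0}
  add_mem' := by
    intro a b ha hb
    simp only [Set.mem_setOf_eq, Pi.add_apply, add_smul, Finset.sum_add_distrib] at *
    simp [ha, hb]
  zero_mem' := by simp
  smul_mem' := by
    intro c a ha
    simp only [Set.mem_setOf_eq, Pi.smul_apply, smul_eq_mul, mul_smul] at *
    rw [← Finset.smul_sum, ha, smul_zero]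

/-- The submodule of vectors supported inside the coordinate set `l`. -/
def supportedIn (l : Set (Fin n)) : Submodule F (Fin n → F) where
  carrier := {u | ∀ j ∉ l, u j = 0}
  add_mem' := by intro a b ha hb j hj; simp [ha j hj, hb j hj]
  zero_mem' := by intro j hj; simp
  smul_mem' := by intro c a ha j hj; simp [ha j hj]

/-- The principal `i`-component `R_i`: span of all triples (codewords of
weight 3) with a `1` in coordinate `i`. -/
def principalComponent (h : Fin n → Fin m → F) (i : Fin n) : Submodule F (Fin n → F) :=
  Submodule.span F {u | u ∈ parityCheckCode h ∧ hammingNorm u = 3 ∧ u i = 1}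

/-- The line of `PG_{m−1}(q)` through the points `a` and `b`, viewed as a set
of coordinates: `k` is on the line iff `h_k` is in the span of `h_a, h_b`. -/
def lineThrough (h : Fin n → Fin m → F) (a b : Fin n) : Set (Fin n) :=
  {k | h k ∈ Submodule.span F {h a, h b}}


/-- `C` is a 1-perfect code over the alphabet `F` with coordinate set `ι`. -/
def IsOnePerfectCode {ι : Type*} [Fintype ι] (C : Set (ι → F)) : Prop :=
  (∀ x ∈ C, ∀ y ∈ C, x ≠ y → 3 ≤ hammingDist x y) ∧
  Nat.card C * (1 + Fintype.card ι * (Fintype.card F - 1)) =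
    Fintype.card F ^ Fintype.card ι

/-- Apply the permutation `σ` of the alphabet to the `i`-th coordinate. -/
def applyAt {N : ℕ} (i : Fin N) (σ : Equiv.Perm F) (x : Fin N → F) : Fin N → F :=
  Function.update x i (σ (x i))

open Finset

section LinearAlgebra

variable {K V : Type*} [Field K] [AddCommGroup V] [Module K V]

/-- The central projection from the point `v` onto the hyperplane `ker φ`. -/
def projectFrom (v : V) (φ : V →ₗ[K] K) : V →ₗ[K] V :=
  LinearMap.id - ((φ v)⁻¹ • φ).smulRight v

theorem projectFrom_apply (v : V) (φ : V →ₗ[K] K) (z : V) :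
    projectFrom v φ z = z - ((φ v)⁻¹ * φ z) • v := by
  simp [projectFrom]

theorem apply_projectFrom {v : V} {φ : V →ₗ[K] K} (hv : φ v ≠ 0) (z : V) :
    φ (projectFrom v φ z) = 0 := by
  simp only [projectFrom_apply, map_sub, map_smul, smul_eq_mul]
  field_simp
  ring

theorem projectFrom_self {v : V} {φ : V →ₗ[K] K} (hv : φ v ≠ 0) : projectFrom v φ v = 0 := by
  simp [projectFrom_apply, hv]

theorem projectFrom_of_apply_eq_zero (v : V) {φ : V →ₗ[K] K} {z : V} (hz : φ z = 0) :
    projectFrom v φ z = z := by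
  simp [projectFrom_apply, hz]

theorem eq_and_eq_of_smul_eq_smul {ι : Type*} {h : ι → V} (hnz : ∀ j, h j ≠ 0)
    (hnp : ∀ j k, j ≠ k → ∀ c : K, h j ≠ c • h k) {a b : ι} {s t : K} (hs : s ≠ 0)
    (hst : s • h a = t • h b) : a = b ∧ s = t := by
  obtain rfl : a = b := by
    by_contra hab
    apply hnp a b hab (s⁻¹ * t)
    rw [mul_smul, ← hst, inv_smul_smul₀ hs]
  exact ⟨rfl, smul_left_injective K (hnz a) hst⟩

end LinearAlgebra

section Hamming

variable {ι β : Type*} [Fintype ι] [DecidableEq ι] [Zero β] [DecidableEq β]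

theorem hammingNorm_single_le_one (j : ι) (b : β) : hammingNorm (Pi.single j b : ι → β) ≤ 1 := by
  refine (card_le_card fun l hl => ?_).trans (card_singleton j).le
  by_contra hlj
  simp [Pi.single_apply, Finset.mem_singleton.not.mp hlj] at hl

theorem hammingNorm_update_zero_lt {x : ι → β} {i : ι} (hx : x i ≠ 0) :
    hammingNorm (Function.update x i 0) < hammingNorm x := by
  refine card_lt_card ((ssubset_iff_of_subset fun j hj => ?_).mpr ⟨i, by simp [hx]⟩)
  by_cases hji : j = i
  · simp [hji] at hj
  · simpa [hji] using hj

theorem hammingNorm_sum_smul_le {κ R : Type*} [Fintype κ] [Semiring R] [DecidableEq R]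
    (v : κ → ι → R) (hv : ∀ k, hammingNorm (v k) ≤ 1) (x : κ → R) :
    hammingNorm (∑ k, x k • v k) ≤ hammingNorm x := by
  calc hammingNorm (∑ k, x k • v k)
      ≤ #(({k | x k ≠ 0} : Finset κ).biUnion fun k => ({j | v k j ≠ 0} : Finset ι)) := by
        refine card_le_card fun j hj => ?_
        simp only [mem_filter, mem_univ, true_and, Finset.sum_apply, Pi.smul_apply,
          smul_eq_mul] at hj
        obtain ⟨k, -, hk⟩ := exists_ne_zero_of_sum_ne_zero hj
        simpa using ⟨k, left_ne_zero_of_mul hk, right_ne_zero_of_mul hk⟩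
    _ ≤ hammingNorm x * 1 := card_biUnion_le_card_mul _ _ _ fun k _ => hv k
    _ = hammingNorm x := mul_one _

end Hamming

theorem Fin.castAdd_ne_natAdd {M n : ℕ} (j : Fin M) (k : Fin n) :
    Fin.castAdd n j ≠ Fin.natAdd M k := by
  rw [Ne, Fin.ext_iff, Fin.val_castAdd, Fin.val_natAdd]
  omega

theorem hammingDist_applyAt {α : Type*} [DecidableEq α] {N : ℕ} (i : Fin N) (σ : Equiv.Perm α)
    (x y : Fin N → α) :
    hammingDist (applyAt i σ x) (applyAt i σ y) = hammingDist x y := by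
  have hcomp : ∀ z : Fin N → α, applyAt i σ z = fun j => (if j = i then ⇑σ else id) (z j) := by
    intro z
    funext j
    by_cases hj : j = i <;> simp [applyAt, hj]
  rw [hcomp, hcomp, hammingDist_comp]
  intro j
  split_ifs
  exacts [σ.injective, Function.injective_id]

theorem applyAt_injective {α : Type*} [DecidableEq α] {N : ℕ} (i : Fin N) (σ : Equiv.Perm α) :
    Function.Injective (applyAt i σ) := fun x y hxy => by
  rw [← hammingDist_eq_zero, ← hammingDist_applyAt i σ, hxy, hammingDist_self]

section ParityCheck

variable {K : Type*} [Field K] {N : ℕ} {h : Fin N → Fin m → K}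

theorem mem_parityCheckCode_iff {x : Fin N → K} :
    x ∈ parityCheckCode h ↔ Fintype.linearCombination K h x = 0 :=
  Iff.rfl

theorem eq_zero_of_hammingNorm_lt_three [DecidableEq K] (hnz : ∀ j, h j ≠ 0)
    (hnp : ∀ j k, j ≠ k → ∀ c : K, h j ≠ c • h k) {u : Fin N → K}
    (hu : u ∈ parityCheckCode h) (hlt : hammingNorm u < 3) : u = 0 := by
  by_contra hu0
  have hsum : ∑ j, u j • h j = 0 := hu
  obtain ⟨a, ha⟩ : ∃ a, u a ≠ 0 := Function.ne_iff.mp hu0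
  obtain ⟨b, hba, hb⟩ : ∃ b, b ≠ a ∧ u b ≠ 0 := by
    by_contra! hb
    rw [Fintype.sum_eq_single a fun j hj => by rw [hb j hj, zero_smul]] at hsum
    exact ha ((smul_eq_zero.mp hsum).resolve_right (hnz a))
  obtain ⟨c, hca, hcb, hc⟩ : ∃ c, c ≠ a ∧ c ≠ b ∧ u c ≠ 0 := by
    by_contra! hc
    rw [Fintype.sum_eq_add a b hba.symm fun j hj => by rw [hc j hj.1 hj.2, zero_smul]] at hsum
    have hab := eq_neg_of_add_eq_zero_left hsum
    rw [← neg_smul] at hab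
    exact hba (eq_and_eq_of_smul_eq_smul hnz hnp ha hab).1.symm
  have hsub : ({a, b, c} : Finset (Fin N)) ⊆ ({j | u j ≠ 0} : Finset (Fin N)) := by
    simp [insert_subset_iff, ha, hb, hc]
  have := card_le_card hsub
  rw [card_eq_three.mpr ⟨a, b, c, hba.symm, hca.symm, hcb.symm, rfl⟩] at this
  exact absurd hlt (not_lt.mpr this)

theorem principalComponent_le_parityCheckCode [DecidableEq K] (i : Fin N) :
    principalComponent h i ≤ parityCheckCode h :=
  Submodule.span_le.mpr fun _ hu => hu.1

theorem single_add_single_add_single_mem_principalComponent [DecidableEq K] {i j k : Fin N}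
    (hij : i ≠ j) (hik : i ≠ k) (hjk : j ≠ k) {a b c : K} (ha : a ≠ 0) (hb : b ≠ 0) (hc : c ≠ 0)
    (hsum : a • h i + b • h j + c • h k = 0) :
    Pi.single i a + Pi.single j b + Pi.single k c ∈ principalComponent h i := by
  set t : Fin N → K := Pi.single i a + Pi.single j b + Pi.single k c
  have ht : t ∈ parityCheckCode h := by
    simpa [mem_parityCheckCode_iff, t] using hsum
  have hsupp : ({l | t l ≠ 0} : Finset (Fin N)) = {i, j, k} := by
    ext l
    by_cases hli : l = i <;> by_cases hlj : l = j <;> by_cases hlk : l = k <;>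
      simp_all [t, Pi.single_apply]
  have hgen : a⁻¹ • t ∈ principalComponent h i := by
    refine Submodule.subset_span ⟨Submodule.smul_mem _ _ ht, ?_, by simp [t, hij, hik, ha]⟩
    rw [hammingNorm_smul fun _ => .of_ne_zero (inv_ne_zero ha)]
    rw [hammingNorm, hsupp]
    exact card_eq_three.mpr ⟨i, j, k, hij, hik, hjk, rfl⟩
  simpa [smul_smul, ha] using Submodule.smul_mem _ a hgen

end ParityCheck

section Fold

variable {K : Type*} [Field K] {M : ℕ} (h : Fin (M + n) → Fin m → K) (φ : (Fin m → K) →ₗ[K] K)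

theorem exists_eq_smul_natAdd (hcover : ∀ z : Fin m → K, z ≠ 0 → ∃ j, ∃ c : K, z = c • h j)
    (hhyp : ∀ j, φ (h j) = 0 ↔ ∃ j' : Fin n, j = Fin.natAdd M j') {z : Fin m → K} (hz : z ≠ 0)
    (hφz : φ z = 0) : ∃ k, ∃ c : K, z = c • h (Fin.natAdd M k) := by
  obtain ⟨j, c, rfl⟩ := hcover z hz
  have hc : c ≠ 0 := by
    rintro rfl
    simp at hz
  obtain ⟨k, rfl⟩ := (hhyp j).1 (by simpa [hc] using hφz)
  exact ⟨k, c, rfl⟩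

theorem apply_castAdd_ne_zero (hhyp : ∀ j, φ (h j) = 0 ↔ ∃ j' : Fin n, j = Fin.natAdd M j')
    (j : Fin M) : φ (h (Fin.castAdd n j)) ≠ 0 := fun h0 => by
  obtain ⟨k, hk⟩ := (hhyp _).1 h0
  exact Fin.castAdd_ne_natAdd j k hk

variable (i : Fin M)

open Classical in
/-- Column `j` of the folding: `β • e_k` when the projection of `h j` from `h i` onto the
hyperplane is `β • h_k`. -/
noncomputable def lineFoldColumn (j : Fin (M + n)) : Fin n → K :=
  if hj : ∃ p : Fin n × K,
      projectFrom (h (Fin.castAdd n i)) φ (h j) = p.2 • h (Fin.natAdd M p.1)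
  then Pi.single hj.choose.1 hj.choose.2 else 0

noncomputable def lineFold : (Fin (M + n) → K) →ₗ[K] Fin n → K :=
  Fintype.linearCombination K (lineFoldColumn h φ i)

theorem lineFold_apply (x : Fin (M + n) → K) :
    lineFold h φ i x = ∑ j, x j • lineFoldColumn h φ i j :=
  rfl

variable {h φ}

theorem linearCombination_lineFoldColumn
    (hcover : ∀ z : Fin m → K, z ≠ 0 → ∃ j, ∃ c : K, z = c • h j)
    (hhyp : ∀ j, φ (h j) = 0 ↔ ∃ j' : Fin n, j = Fin.natAdd M j') (j : Fin (M + n)) :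
    Fintype.linearCombination K (fun k => h (Fin.natAdd M k)) (lineFoldColumn h φ i j) =
      projectFrom (h (Fin.castAdd n i)) φ (h j) := by
  rw [lineFoldColumn]
  split_ifs with hj
  · simpa using hj.choose_spec.symm
  · by_contra hne
    obtain ⟨k, c, hc⟩ := exists_eq_smul_natAdd h φ hcover hhyp (by simpa [eq_comm] using hne)
      (apply_projectFrom (apply_castAdd_ne_zero h φ hhyp i) _)
    exact hj ⟨(k, c), hc⟩

theorem lineFoldColumn_castAdd_self (hnz : ∀ j, h j ≠ 0)
    (hhyp : ∀ j, φ (h j) = 0 ↔ ∃ j' : Fin n, j = Fin.natAdd M j') :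
    lineFoldColumn h φ i (Fin.castAdd n i) = 0 := by
  rw [lineFoldColumn]
  split_ifs with hj
  · have hβ := smul_eq_zero.mp
      (hj.choose_spec.symm.trans (projectFrom_self (apply_castAdd_ne_zero h φ hhyp i)))
    simp [hβ.resolve_right (hnz _)]
  · rfl

theorem lineFoldColumn_natAdd (hnz : ∀ j, h j ≠ 0) (hnp : ∀ j k, j ≠ k → ∀ c : K, h j ≠ c • h k)
    (hhyp : ∀ j, φ (h j) = 0 ↔ ∃ j' : Fin n, j = Fin.natAdd M j') (k : Fin n) :
    lineFoldColumn h φ i (Fin.natAdd M k) = Pi.single k 1 := by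
  have hP := projectFrom_of_apply_eq_zero (h (Fin.castAdd n i)) ((hhyp _).2 ⟨k, rfl⟩)
  rw [lineFoldColumn, dif_pos ⟨(k, 1), by rw [hP, one_smul]⟩]
  generalize_proofs hex
  obtain ⟨hk, h1⟩ := eq_and_eq_of_smul_eq_smul hnz hnp one_ne_zero
    ((one_smul K _).trans (hP.symm.trans hex.choose_spec))
  rw [← (Fin.natAdd_inj M).mp hk, ← h1]

theorem hammingNorm_lineFoldColumn_le [DecidableEq K] (j : Fin (M + n)) :
    hammingNorm (lineFoldColumn h φ i j) ≤ 1 := by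
  rw [lineFoldColumn]
  split_ifs
  · exact hammingNorm_single_le_one _ _
  · simp

theorem hammingNorm_lineFold_le [DecidableEq K] (x : Fin (M + n) → K) :
    hammingNorm (lineFold h φ i x) ≤ hammingNorm x :=
  hammingNorm_sum_smul_le _ (hammingNorm_lineFoldColumn_le i) x

theorem hammingDist_lineFold_le [DecidableEq K] (x y : Fin (M + n) → K) :
    hammingDist (lineFold h φ i x) (lineFold h φ i y) ≤ hammingDist x y := by
  rw [hammingDist_eq_hammingNorm, hammingDist_eq_hammingNorm, ← map_neg, ← map_add]
  exact hammingNorm_lineFold_le i _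

theorem lineFold_update_castAdd_self (hnz : ∀ j, h j ≠ 0)
    (hhyp : ∀ j, φ (h j) = 0 ↔ ∃ j' : Fin n, j = Fin.natAdd M j') (x : Fin (M + n) → K) (a : K) :
    lineFold h φ i (Function.update x (Fin.castAdd n i) a) = lineFold h φ i x := by
  simp only [lineFold_apply]
  refine Fintype.sum_congr _ _ fun j => ?_
  by_cases hj : j = Fin.castAdd n i
  · simp [hj, lineFoldColumn_castAdd_self i hnz hhyp]
  · rw [Function.update_of_ne hj]

theorem lineFold_append_zero (hnz : ∀ j, h j ≠ 0) (hnp : ∀ j k, j ≠ k → ∀ c : K, h j ≠ c • h k)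
    (hhyp : ∀ j, φ (h j) = 0 ↔ ∃ j' : Fin n, j = Fin.natAdd M j') (c : Fin n → K) :
    lineFold h φ i (Fin.append 0 c) = c := by
  simp [lineFold_apply, Fin.sum_univ_add, lineFoldColumn_natAdd i hnz hnp hhyp, ← pi_eq_sum_univ']

theorem lineFold_mem_parityCheckCode (hcover : ∀ z : Fin m → K, z ≠ 0 → ∃ j, ∃ c : K, z = c • h j)
    (hhyp : ∀ j, φ (h j) = 0 ↔ ∃ j' : Fin n, j = Fin.natAdd M j') {x : Fin (M + n) → K}
    (hx : x ∈ parityCheckCode h) :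
    lineFold h φ i x ∈ parityCheckCode fun k => h (Fin.natAdd M k) := by
  rw [mem_parityCheckCode_iff] at hx ⊢
  simp_rw [lineFold_apply, map_sum, map_smul, linearCombination_lineFoldColumn i hcover hhyp,
    ← map_smul, ← map_sum, ← Fintype.linearCombination_apply, hx, map_zero]

variable [DecidableEq K]

theorem principalComponent_le_ker_lineFold (hnz : ∀ j, h j ≠ 0)
    (hnp : ∀ j k, j ≠ k → ∀ c : K, h j ≠ c • h k)
    (hcover : ∀ z : Fin m → K, z ≠ 0 → ∃ j, ∃ c : K, z = c • h j)
    (hhyp : ∀ j, φ (h j) = 0 ↔ ∃ j' : Fin n, j = Fin.natAdd M j') :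
    principalComponent h (Fin.castAdd n i) ≤ LinearMap.ker (lineFold h φ i) := by
  refine Submodule.span_le.mpr ?_
  rintro u ⟨hu, hu3, hui⟩
  refine eq_zero_of_hammingNorm_lt_three (fun k => hnz _)
    (fun k k' hkk' => hnp _ _ ((Fin.natAdd_inj M).not.mpr hkk'))
    (lineFold_mem_parityCheckCode i hcover hhyp hu) ?_
  rw [← lineFold_update_castAdd_self i hnz hhyp u 0, ← hu3]
  exact (hammingNorm_lineFold_le i _).trans_lt
    (hammingNorm_update_zero_lt (by rw [hui]; exact one_ne_zero))

theorem lineFold_applyAt_add_append (hnz : ∀ j, h j ≠ 0)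
    (hnp : ∀ j k, j ≠ k → ∀ c : K, h j ≠ c • h k)
    (hcover : ∀ z : Fin m → K, z ≠ 0 → ∃ j, ∃ c : K, z = c • h j)
    (hhyp : ∀ j, φ (h j) = 0 ↔ ∃ j' : Fin n, j = Fin.natAdd M j') (τ : Equiv.Perm K)
    {r : Fin (M + n) → K} (hr : r ∈ principalComponent h (Fin.castAdd n i)) (c : Fin n → K) :
    lineFold h φ i (applyAt (Fin.castAdd n i) τ (r + Fin.append 0 c)) = c := by
  rw [applyAt, lineFold_update_castAdd_self i hnz hhyp, map_add,
    principalComponent_le_ker_lineFold i hnz hnp hcover hhyp hr,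
    lineFold_append_zero i hnz hnp hhyp, zero_add]

theorem eq_zero_of_mem_principalComponent_of_castAdd_eq_zero (hnz : ∀ j, h j ≠ 0)
    (hnp : ∀ j k, j ≠ k → ∀ c : K, h j ≠ c • h k)
    (hcover : ∀ z : Fin m → K, z ≠ 0 → ∃ j, ∃ c : K, z = c • h j)
    (hhyp : ∀ j, φ (h j) = 0 ↔ ∃ j' : Fin n, j = Fin.natAdd M j') {x : Fin (M + n) → K}
    (hx : x ∈ principalComponent h (Fin.castAdd n i))
    (hoff : ∀ j, j ≠ i → x (Fin.castAdd n j) = 0) : x = 0 := by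
  set c : Fin n → K := fun k => x (Fin.natAdd M k)
  have hdecomp : Function.update x (Fin.castAdd n i) 0 = Fin.append 0 c := by
    funext l
    refine Fin.addCases (fun j => ?_) (fun k => ?_) l
    · by_cases hj : j = i
      · simp [hj]
      · simp [hoff j hj, hj]
    · simp [c, Function.update_of_ne (Fin.castAdd_ne_natAdd i k).symm]
  have hc : c = 0 := by
    rw [← lineFold_append_zero i hnz hnp hhyp c, ← hdecomp, lineFold_update_castAdd_self i hnz hhyp]
    exact principalComponent_le_ker_lineFold i hnz hnp hcover hhyp hx
  have hsingle : x = Pi.single (Fin.castAdd n i) (x (Fin.castAdd n i)) := by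
    funext l
    refine Fin.addCases (fun j => ?_) (fun k => ?_) l
    · by_cases hj : j = i
      · simp [hj]
      · simp [hoff j hj, hj]
    · simpa [(Fin.castAdd_ne_natAdd i k).symm] using congrFun hc k
  refine eq_zero_of_hammingNorm_lt_three hnz hnp (principalComponent_le_parityCheckCode _ hx) ?_
  rw [hsingle]
  exact (hammingNorm_single_le_one _ _).trans_lt (by norm_num)

theorem exists_mem_principalComponent_castAdd_eq_single
    (hnp : ∀ j k, j ≠ k → ∀ c : K, h j ≠ c • h k)
    (hcover : ∀ z : Fin m → K, z ≠ 0 → ∃ j, ∃ c : K, z = c • h j)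
    (hhyp : ∀ j, φ (h j) = 0 ↔ ∃ j' : Fin n, j = Fin.natAdd M j') {j : Fin M} (hj : j ≠ i) :
    ∃ u ∈ principalComponent h (Fin.castAdd n i),
      ∀ l, l ≠ i → u (Fin.castAdd n l) = (Pi.single j 1 : Fin M → K) l := by
  set v := h (Fin.castAdd n i)
  set α := (φ v)⁻¹ * φ (h (Fin.castAdd n j))
  have hα : α ≠ 0 := mul_ne_zero (inv_ne_zero (apply_castAdd_ne_zero h φ hhyp i))
    (apply_castAdd_ne_zero h φ hhyp j)
  have hP : projectFrom v φ (h (Fin.castAdd n j)) ≠ 0 := by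
    rw [projectFrom_apply, sub_ne_zero]
    exact hnp _ _ (Fin.castAdd_inj.not.mpr hj) _
  obtain ⟨k, β, hβ⟩ := exists_eq_smul_natAdd h φ hcover hhyp hP
    (apply_projectFrom (apply_castAdd_ne_zero h φ hhyp i) _)
  have hβ0 : β ≠ 0 := by
    rintro rfl
    exact hP (by rw [hβ, zero_smul])
  rw [projectFrom_apply] at hβ
  refine ⟨_, single_add_single_add_single_mem_principalComponent (Fin.castAdd_inj.not.mpr hj.symm)
    (Fin.castAdd_ne_natAdd i k) (Fin.castAdd_ne_natAdd j k) (neg_ne_zero.mpr hα) one_ne_zero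
    (neg_ne_zero.mpr hβ0) ?_, fun l hl => ?_⟩
  · linear_combination (norm := module) hβ
  · simp [Pi.single_apply, hl, Fin.castAdd_ne_natAdd]

theorem card_principalComponent [Fintype K] (hnz : ∀ j, h j ≠ 0)
    (hnp : ∀ j k, j ≠ k → ∀ c : K, h j ≠ c • h k)
    (hcover : ∀ z : Fin m → K, z ≠ 0 → ∃ j, ∃ c : K, z = c • h j)
    (hhyp : ∀ j, φ (h j) = 0 ↔ ∃ j' : Fin n, j = Fin.natAdd M j') :
    Nat.card (principalComponent h (Fin.castAdd n i)) = Fintype.card K ^ (M - 1) := by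
  set ρ : (Fin (M + n) → K) →ₗ[K] ({l : Fin M // l ≠ i} → K) :=
    LinearMap.funLeft K K fun l => Fin.castAdd n l.1
  have hinj : Function.Injective (ρ.domRestrict (principalComponent h (Fin.castAdd n i))) := by
    refine (injective_iff_map_eq_zero _).mpr fun x hx => Subtype.ext ?_
    exact eq_zero_of_mem_principalComponent_of_castAdd_eq_zero i hnz hnp hcover hhyp x.2
      fun l hl => congrFun hx ⟨l, hl⟩
  have hsurj : Function.Surjective (ρ.domRestrict (principalComponent h (Fin.castAdd n i))) := by
    rw [← LinearMap.range_eq_top, eq_top_iff, ← (Pi.basisFun K _).span_eq, Submodule.span_le]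
    rintro _ ⟨⟨j, hj⟩, rfl⟩
    obtain ⟨u, hu, hu1⟩ := exists_mem_principalComponent_castAdd_eq_single i hnp hcover hhyp hj
    exact ⟨⟨u, hu⟩, funext fun ⟨l, hl⟩ => by simp [ρ, hu1 l hl, Pi.single_apply]⟩
  rw [Nat.card_congr (LinearEquiv.ofBijective _ ⟨hinj, hsurj⟩).toEquiv, Nat.card_fun]
  simp

end Fold

section Construction

variable {K : Type*} [Field K] {M : ℕ}

/-- The word `σ_c(r + (0 | c))` of the construction, indexed by `(c, r)`. -/
def lindstromSchonheimWord (i : Fin M) (σ : (Fin n → K) → Equiv.Perm K)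
    (p : (Fin n → K) × (Fin (M + n) → K)) : Fin (M + n) → K :=
  applyAt (Fin.castAdd n i) (σ p.1) (p.2 + Fin.append 0 p.1)

theorem biUnion_image_applyAt_eq_image (i : Fin M) (σ : (Fin n → K) → Equiv.Perm K)
    (C1 : Set (Fin n → K)) (R : Submodule K (Fin (M + n) → K)) :
    ⋃ c ∈ C1, applyAt (Fin.castAdd n i) (σ c) '' {w | ∃ r ∈ R, w = r + Fin.append 0 c} =
      lindstromSchonheimWord i σ '' (C1 ×ˢ R) := by
  ext x
  simp only [Set.mem_iUnion, Set.mem_image, Set.mem_ofPred_eq, Set.mem_prod, Prod.exists,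
    lindstromSchonheimWord, exists_prop]
  constructor
  · rintro ⟨c, hc, _, ⟨r, hr, rfl⟩, rfl⟩
    exact ⟨c, r, ⟨hc, hr⟩, rfl⟩
  · rintro ⟨c, r, ⟨hc, hr⟩, rfl⟩
    exact ⟨c, hc, _, ⟨r, hr, rfl⟩, rfl⟩

variable [DecidableEq K] {h : Fin (M + n) → Fin m → K} {φ : (Fin m → K) →ₗ[K] K} (i : Fin M)
  (σ : (Fin n → K) → Equiv.Perm K)

theorem injOn_lindstromSchonheimWord (hnz : ∀ j, h j ≠ 0)
    (hnp : ∀ j k, j ≠ k → ∀ c : K, h j ≠ c • h k)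
    (hcover : ∀ z : Fin m → K, z ≠ 0 → ∃ j, ∃ c : K, z = c • h j)
    (hhyp : ∀ j, φ (h j) = 0 ↔ ∃ j' : Fin n, j = Fin.natAdd M j') (C1 : Set (Fin n → K)) :
    Set.InjOn (lindstromSchonheimWord i σ) (C1 ×ˢ (principalComponent h (Fin.castAdd n i))) := by
  rintro ⟨c, r⟩ ⟨-, hr⟩ ⟨c', r'⟩ ⟨-, hr'⟩ he
  obtain rfl : c = c' := by
    simpa [lindstromSchonheimWord, lineFold_applyAt_add_append i hnz hnp hcover hhyp _ hr,
      lineFold_applyAt_add_append i hnz hnp hcover hhyp _ hr'] using congrArg (lineFold h φ i) he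
  simpa using applyAt_injective _ _ he

theorem three_le_hammingDist_lindstromSchonheimWord (hnz : ∀ j, h j ≠ 0)
    (hnp : ∀ j k, j ≠ k → ∀ c : K, h j ≠ c • h k)
    (hcover : ∀ z : Fin m → K, z ≠ 0 → ∃ j, ∃ c : K, z = c • h j)
    (hhyp : ∀ j, φ (h j) = 0 ↔ ∃ j' : Fin n, j = Fin.natAdd M j') {C1 : Set (Fin n → K)}
    (hC1 : ∀ x ∈ C1, ∀ y ∈ C1, x ≠ y → 3 ≤ hammingDist x y)
    {p q : (Fin n → K) × (Fin (M + n) → K)}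
    (hp : p ∈ C1 ×ˢ (principalComponent h (Fin.castAdd n i)))
    (hq : q ∈ C1 ×ˢ (principalComponent h (Fin.castAdd n i)))
    (hne : lindstromSchonheimWord i σ p ≠ lindstromSchonheimWord i σ q) :
    3 ≤ hammingDist (lindstromSchonheimWord i σ p) (lindstromSchonheimWord i σ q) := by
  obtain ⟨c, r⟩ := p
  obtain ⟨c', r'⟩ := q
  obtain ⟨hc, hr⟩ := hp
  obtain ⟨hc', hr'⟩ := hq
  by_cases hcc : c = c'
  · subst hcc
    by_contra! hlt
    rw [lindstromSchonheimWord, lindstromSchonheimWord, hammingDist_applyAt,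
      hammingDist_eq_hammingNorm, neg_add_eq_sub, add_sub_add_right_eq_sub] at hlt
    have hH := principalComponent_le_parityCheckCode (h := h) (Fin.castAdd n i)
    exact hne (by rw [lindstromSchonheimWord, lindstromSchonheimWord,
      sub_eq_zero.mp (eq_zero_of_hammingNorm_lt_three hnz hnp (sub_mem (hH hr') (hH hr)) hlt)])
  · calc 3 ≤ hammingDist c c' := hC1 c hc c' hc' hcc
      _ = hammingDist (lineFold h φ i (lindstromSchonheimWord i σ (c, r)))
            (lineFold h φ i (lindstromSchonheimWord i σ (c', r'))) := by
          rw [lindstromSchonheimWord, lindstromSchonheimWord,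
            lineFold_applyAt_add_append i hnz hnp hcover hhyp _ hr,
            lineFold_applyAt_add_append i hnz hnp hcover hhyp _ hr']
      _ ≤ _ := hammingDist_lineFold_le i _ _

end Construction

theorem generalized_lindstrom_schonheim_general
    (h : Fin (((Fintype.card F - 1) * n + 1) + n) → Fin (m + 1) → F)
    (hnz : ∀ j, h j ≠ 0)
    (hnp : ∀ j k, j ≠ k → ∀ c : F, h j ≠ c • h k)
    (hcover : ∀ z : Fin (m + 1) → F, z ≠ 0 → ∃ j, ∃ c : F, z = c • h j)
    (φ : (Fin (m + 1) → F) →ₗ[F] F)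
    (hhyp : ∀ j, φ (h j) = 0 ↔ ∃ j' : Fin n, j = Fin.natAdd ((Fintype.card F - 1) * n + 1) j')
    (i : Fin ((Fintype.card F - 1) * n + 1))
    (C1 : Set (Fin n → F)) (hC1 : IsOnePerfectCode C1)
    (σ : (Fin n → F) → Equiv.Perm F) :
    IsOnePerfectCode
      (⋃ c ∈ C1,
        applyAt (Fin.castAdd n i) (σ c) ''
          {w | ∃ r ∈ principalComponent h (Fin.castAdd n i),
                w = r + Fin.append (0 : Fin ((Fintype.card F - 1) * n + 1) → F) c}) := by
  rw [biUnion_image_applyAt_eq_image]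
  refine ⟨?_, ?_⟩
  · rintro _ ⟨p, hp, rfl⟩ _ ⟨p', hp', rfl⟩ hne
    exact three_le_hammingDist_lindstromSchonheimWord i σ hnz hnp hcover hhyp hC1.1 hp hp' hne
  · rw [Nat.card_image_of_injOn (injOn_lindstromSchonheimWord i σ hnz hnp hcover hhyp C1),
      Nat.card_congr (Equiv.Set.prod _ _), Nat.card_prod, SetLike.coe_sort_coe,
      card_principalComponent i hnz hnp hcover hhyp]
    have hC1card := hC1.2
    obtain ⟨p, hp⟩ : ∃ p, Fintype.card F = p + 1 :=
      ⟨_, (Nat.succ_pred_eq_of_pos Fintype.card_pos).symm⟩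
    simp only [Fintype.card_fin, hp, Nat.add_sub_cancel] at hC1card ⊢
    calc Nat.card C1 * (p + 1) ^ (p * n) * (1 + (p * n + 1 + n) * p)
        = Nat.card C1 * (1 + n * p) * ((p + 1) ^ (p * n) * (p + 1)) := by ring
      _ = (p + 1) ^ (p * n + 1 + n) := by rw [hC1card]; ring

/-- the generalized Lindström–Schönheim construction.  Let `C1`
be a `q`-ary 1-perfect code of length `n = (q^m−1)/(q−1)`, let `R_i` be the
principal `i`-component of the Hamming code `H_{q,m+1}` of length
`qn + 1 = ((q−1)n + 1) + n`, with `i ≤ (q−1)n + 1` (i.e. `i` among the first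
`(q−1)n + 1` coordinates) and the last `n` coordinates forming a hyperplane of
`PG_m(q)` (necessarily avoiding `i`), and for each `c ∈ C1` let `σ_c` be a
permutation of `F_q`.  Then `C = ∪_{c ∈ C1} σ_c(R_i + (0 | c))` is a `q`-ary
1-perfect code of length `qn + 1`. -/
theorem generalized_lindstrom_schonheim
    (hq : Fintype.card F ≥ 2) (hm : 2 ≤ m)
    (hn : n = (Fintype.card F ^ m - 1) / (Fintype.card F - 1))
    (h : Fin (((Fintype.card F - 1) * n + 1) + n) → Fin (m + 1) → F)
    (hnz : ∀ j, h j ≠ 0)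
    (hnp : ∀ j k, j ≠ k → ∀ c : F, h j ≠ c • h k)
    (hcover : ∀ z : Fin (m + 1) → F, z ≠ 0 → ∃ j, ∃ c : F, z = c • h j)
    (φ : (Fin (m + 1) → F) →ₗ[F] F) (hφ : φ ≠ 0)
    (hhyp : ∀ j, φ (h j) = 0 ↔ ∃ j' : Fin n, j = Fin.natAdd ((Fintype.card F - 1) * n + 1) j')
    (i : Fin ((Fintype.card F - 1) * n + 1))
    (C1 : Set (Fin n → F)) (hC1 : IsOnePerfectCode C1)
    (σ : (Fin n → F) → Equiv.Perm F) :
    IsOnePerfectCode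
      (⋃ c ∈ C1,
        applyAt (Fin.castAdd n i) (σ c) ''
          {w | ∃ r ∈ principalComponent h (Fin.castAdd n i),
                w = r + Fin.append (0 : Fin ((Fintype.card F - 1) * n + 1) → F) c}) :=
  generalized_lindstrom_schonheim_general h hnz hnp hcover φ hhyp i C1 hC1 σ
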